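/- The Geometric mechanism satisfies ε-differential privacy: if f : D → ℤ has sensitivity Δf (i.e., |f(X) - f(X')| ≤ Δf for all neighboring datasets X, X'), then the mechanism A(X) = f(X) + Y with Y ∼ two-sided-Geom(exp(-ε/Δf)) satisfies Pr[A(X)=m] ≤ e^ε · Pr[A(X')=m] for all integers m and neighboring X, X'. -/
import Mathlib


/-- The Geometric mechanism satisfies ε-DP: if `f` has sensitivity `Δf` with respect
to a symmetric neighboring relation, and `A(X) = f(X) + Y` with `Y` two-sided
geometric with parameter `α = exp(-ε/Δf)`, then for all neighboring `X, X'` and all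
integers `m`, `P(m - f(X)) ≤ e^ε · P(m - f(X'))`. -/
theorem geometric_mechanism_dp {D : Type*} (Neighbor : D → D → Prop)
    (hsymm : ∀ X X', Neighbor X X' → Neighbor X' X)
    (f : D → ℤ) (Δf ε : ℝ) (hΔ : 0 < Δf) (hε : 0 < ε)
    (hsens : ∀ X X', Neighbor X X' → |((f X - f X' : ℤ) : ℝ)| ≤ Δf) :
    ∀ X X', Neighbor X X' → ∀ m : ℤ,
      ((1 - Real.exp (-ε / Δf)) / (1 + Real.exp (-ε / Δf))) *
          Real.exp (-ε / Δf) ^ (m - f X).natAbs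
        ≤ Real.exp ε *
          (((1 - Real.exp (-ε / Δf)) / (1 + Real.exp (-ε / Δf))) *
            Real.exp (-ε / Δf) ^ (m - f X').natAbs) := by
  intro X X' hN m
  set α := Real.exp (-ε / Δf) with hα
  have hαpos : 0 < α := Real.exp_pos _
  have hα1 : α < 1 := by
    rw [hα]
    have : -ε / Δf < 0 := div_neg_of_neg_of_pos (by linarith) hΔ
    calc Real.exp (-ε / Δf) < Real.exp 0 := Real.exp_lt_exp.2 this
      _ = 1 := Real.exp_zero
  have hc : 0 ≤ (1 - α) / (1 + α) := div_nonneg (by linarith) (by linarith)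
  set n := (m - f X).natAbs
  set n' := (m - f X').natAbs
  set d := (f X - f X').natAbs
  have htri : n' ≤ n + d := by
    have : m - f X' = (m - f X) + (f X - f X') := by ring
    calc n' = ((m - f X) + (f X - f X')).natAbs := by rw [← this]
      _ ≤ n + d := Int.natAbs_add_le _ _
  have hd : (d : ℝ) ≤ Δf := by
    have h := hsens X X' hN
    have hde : (((f X - f X').natAbs : ℕ) : ℝ) = |((f X - f X' : ℤ) : ℝ)| := by
      rw [Nat.cast_natAbs, Int.cast_abs]
    rw [hde]; exact h
  -- α^d ≥ exp(-ε)
  have hαd : Real.exp (-ε) ≤ α ^ d := by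
    rw [hα, ← Real.exp_nat_mul]
    apply Real.exp_le_exp.2
    have hd0 : (0:ℝ) ≤ d := Nat.cast_nonneg d
    have hre : (d : ℝ) * (-ε / Δf) = -((d : ℝ) * ε / Δf) := by ring
    rw [hre, neg_le_neg_iff, div_le_iff₀ hΔ]
    nlinarith
  have h1 : α ^ (n + d) ≤ α ^ n' := pow_le_pow_of_le_one hαpos.le hα1.le htri
  have h2 : α ^ n * Real.exp (-ε) ≤ α ^ n' := by
    calc α ^ n * Real.exp (-ε) ≤ α ^ n * α ^ d := by
          exact mul_le_mul_of_nonneg_left hαd (by positivity)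
      _ = α ^ (n + d) := (pow_add α n d).symm
      _ ≤ α ^ n' := h1
  have h3 : α ^ n ≤ Real.exp ε * α ^ n' := by
    have h4 := mul_le_mul_of_nonneg_right h2 (Real.exp_pos ε).le
    rw [mul_assoc, ← Real.exp_add] at h4
    simpa [mul_comm] using h4
  calc (1 - α) / (1 + α) * α ^ n ≤ (1 - α) / (1 + α) * (Real.exp ε * α ^ n') :=
        mul_le_mul_of_nonneg_left h3 hc
    _ = Real.exp ε * ((1 - α) / (1 + α) * α ^ n') := by ring
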